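/- Every partition of n ≥ 3 can be reconstructed from its set of 1-deletions: if λ and ν are partitions of n ≥ 3 with the same set of 1-deletions, then λ = ν. -/

import Mathlib

/-- A partition: a nonincreasing sequence of naturals (rows indexed from 0),
with finitely many nonzero parts. -/
def IsPartition (f : ℕ → ℕ) : Prop :=
  (∀ ⦃i j : ℕ⦄, i ≤ j → f j ≤ f i) ∧ {i | f i ≠ 0}.Finite

/-- The number of cells of a partition. -/
noncomputable def psize (f : ℕ → ℕ) : ℕ := ∑ᶠ i, f i

/-- `δ` is a `k`-deletion of `f`: a partition contained in `f` with `k` fewer cells. -/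
def IsDeletion (k : ℕ) (δ f : ℕ → ℕ) : Prop :=
  IsPartition δ ∧ (∀ i, δ i ≤ f i) ∧ psize f = psize δ + k

/-- The conjugate: `conj f c` is the number of cells in (0-indexed) column `c`. -/
noncomputable def conj (f : ℕ → ℕ) (c : ℕ) : ℕ := Set.ncard {i | c < f i}

/-
Removing the cell at the end of a row `i` with `f (i + 1) < f i` gives a 1-deletion of `f`, so
also of `g`, and `g` is recovered from it by adding a cell in some row `j`. If `j = i` then
`f = g`. Otherwise row `i` of `g` is one shorter than row `i` of `f`, so no other removable
cell of `f` can give a 1-deletion of `g`: `f` has a single removable cell, i.e. it is a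
rectangle, and likewise `g`. Two rectangles that differ by moving one cell are the shapes
`(2)` and `(1, 1)`, which have size 2.
-/

open Function

theorem Function.HasFiniteSupport.update {α M : Type*} [DecidableEq α] [Zero M] {f : α → M}
    (hf : HasFiniteSupport f) (a : α) (v : M) : HasFiniteSupport (update f a v) := by
  classical
  rw [HasFiniteSupport, support_update_eq_ite]
  split_ifs
  exacts [hf.sdiff, hf.insert a]

section

variable {f δ : ℕ → ℕ}

theorem psize_update_add (hf : HasFiniteSupport f) (m v : ℕ) :
    psize (update f m v) + f m = psize f + v := by
  have hrest : ∑ᶠ (k) (_ : k ≠ m), update f m v k = ∑ᶠ (k) (_ : k ≠ m), f k :=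
    finsum_congr fun k => finsum_congr fun hkm => update_of_ne hkm v f
  rw [psize, psize, ← add_finsum_cond_ne m hf, ← add_finsum_cond_ne m (hf.update m v), hrest,
    update_self]
  ring

theorem psize_update_sub_one_add_one (hf : HasFiniteSupport f) {m : ℕ} (hm : f m ≠ 0) :
    psize (update f m (f m - 1)) + 1 = psize f := by
  have := psize_update_add hf m (f m - 1)
  omega

theorem le_update_sub_one_of_lt (hle : ∀ i, δ i ≤ f i) {m : ℕ} (hlt : δ m < f m) (i : ℕ) :
    δ i ≤ update f m (f m - 1) i := by
  rcases eq_or_ne i m with rfl | him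
  · rw [update_self]; omega
  · rw [update_of_ne him]; exact hle i

theorem psize_add_one_le_of_lt (hf : HasFiniteSupport f) (hle : ∀ i, δ i ≤ f i) {m : ℕ}
    (hlt : δ m < f m) : psize δ + 1 ≤ psize f := by
  have hδ : HasFiniteSupport δ :=
    hf.subset fun i hi => by have := hle i; simp only [mem_support] at hi ⊢; omega
  calc psize δ + 1 ≤ psize (update f m (f m - 1)) + 1 :=
        Nat.add_le_add_right
          (finsum_le_finsum' hδ (hf.update _ _) (le_update_sub_one_of_lt hle hlt)) 1
    _ = psize f := psize_update_sub_one_add_one hf (by omega)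

end

theorem IsDeletion.exists_eq_update {δ f : ℕ → ℕ} (hf : HasFiniteSupport f)
    (h : IsDeletion 1 δ f) : ∃ i, f i ≠ 0 ∧ δ = update f i (f i - 1) := by
  obtain ⟨-, hle, hsize⟩ := h
  obtain ⟨i, hi⟩ : ∃ i, δ i < f i := by
    by_contra! hge
    obtain rfl : δ = f := funext fun i => le_antisymm (hle i) (hge i)
    omega
  refine ⟨i, by omega, ?_⟩
  by_contra hne
  obtain ⟨k, hk⟩ := Function.ne_iff.1 hne
  have hlt := psize_add_one_le_of_lt (hf.update _ _) (le_update_sub_one_of_lt hle hi)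
    (lt_of_le_of_ne (le_update_sub_one_of_lt hle hi k) hk)
  have := psize_update_sub_one_add_one hf (m := i) (by omega)
  omega

namespace IsPartition

variable {f : ℕ → ℕ}

theorem hasFiniteSupport (hf : IsPartition f) : HasFiniteSupport f := hf.2

theorem isDeletion_update (hf : IsPartition f) {m : ℕ} (hm : f (m + 1) < f m) :
    IsDeletion 1 (update f m (f m - 1)) f := by
  refine ⟨⟨fun a b hab => ?_, hf.hasFiniteSupport.update m _⟩, fun i => ?_,
    (psize_update_sub_one_add_one hf.hasFiniteSupport (by omega)).symm⟩
  · have hmb : m + 1 ≤ b → f b ≤ f (m + 1) := fun h => hf.1 h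
    have := hf.1 hab
    simp only [update_apply]
    split_ifs <;> subst_vars <;> omega
  · rw [update_apply]
    split_ifs <;> subst_vars <;> omega

theorem exists_eq_zero (hf : IsPartition f) : ∃ N, f N = 0 := by
  simpa using hf.2.exists_notMem

theorem exists_succ_lt (hf : IsPartition f) (hpos : psize f ≠ 0) : ∃ m, f (m + 1) < f m := by
  classical
  have hf0 : f 0 ≠ 0 := by
    intro h0
    exact hpos (finsum_eq_zero_of_forall_eq_zero fun k => by have := hf.1 k.zero_le; omega)
  have hN : ∃ N, f N = 0 := hf.exists_eq_zero
  have hzero := Nat.find_spec hN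
  have hfind : Nat.find hN ≠ 0 := fun h => hf0 (by rwa [h] at hzero)
  have := Nat.find_min hN (show Nat.find hN - 1 < Nat.find hN by omega)
  refine ⟨Nat.find hN - 1, ?_⟩
  rw [Nat.sub_add_cancel (by omega)]
  omega

theorem eq_ite_of_succ_lt_imp_eq (hf : IsPartition f) {i : ℕ}
    (hu : ∀ m, f (m + 1) < f m → m = i) (k : ℕ) :
    f k = if k ≤ i then f i else 0 := by
  have hstep : ∀ m, m ≠ i → f (m + 1) = f m := fun m hm =>
    le_antisymm (hf.1 m.le_succ) (not_lt.1 fun h => hm (hu m h))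
  have below : ∀ k ≤ i, f k = f 0 := by
    intro k hk
    induction k with
    | zero => rfl
    | succ k ih => rw [hstep k (by omega), ih (by omega)]
  have above : ∀ d, f (i + 1 + d) = f (i + 1) := by
    intro d
    induction d with
    | zero => rfl
    | succ d ih => rw [← add_assoc, hstep _ (by omega), ih]
  obtain ⟨N, hN⟩ := hf.exists_eq_zero
  have hzero : f (i + 1) = 0 := by
    have := hf.1 (show N ≤ i + 1 + N by omega)
    rw [above] at this
    omega
  split_ifs with hk
  · rw [below k hk, below i le_rfl]
  · rw [show k = i + 1 + (k - (i + 1)) by omega, above, hzero]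

end IsPartition

theorem eq_of_update_sub_one_eq {f g : ℕ → ℕ} {i : ℕ} (hfi : f i ≠ 0) (hgi : g i ≠ 0)
    (heq : update f i (f i - 1) = update g i (g i - 1)) : f = g := by
  funext k
  have := congrFun heq k
  rcases eq_or_ne k i with rfl | hki
  · rw [update_self, update_self] at this
    omega
  · simpa [update_of_ne hki] using this

theorem IsPartition.eq_of_succ_lt_of_update_eq {f g : ℕ → ℕ} (hf : IsPartition f)
    (hfg : ∀ δ, IsDeletion 1 δ f → IsDeletion 1 δ g) {i j : ℕ} (hij : i ≠ j)
    (hfi : f i ≠ 0)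
    (heq : update f i (f i - 1) = update g j (g j - 1)) {m : ℕ} (hm : f (m + 1) < f m) :
    m = i := by
  by_contra hmi
  have hle : update f m (f m - 1) i ≤ g i := (hfg _ (hf.isDeletion_update hm)).2.1 i
  have hgi : f i - 1 = g i := by simpa [hij] using congrFun heq i
  rw [update_of_ne (Ne.symm hmi)] at hle
  omega

theorem psize_eq_two_of_update_eq {f g : ℕ → ℕ} {i j : ℕ} (hij : i < j)
    (hf : ∀ k, f k = if k ≤ i then f i else 0) (hg : ∀ k, g k = if k ≤ j then g j else 0)
    (hgj : g j ≠ 0) (heq : update f i (f i - 1) = update g j (g j - 1)) : psize f = 2 := by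
  have hfj : f j = 0 := by simpa [hij.not_ge] using hf j
  have hgj1 : g j = 1 := by
    have := congrFun heq j
    rw [update_of_ne hij.ne', update_self] at this
    omega
  have hfi : f i = 2 := by
    have := congrFun heq i
    rw [update_self, update_of_ne hij.ne, hg i, if_pos hij.le] at this
    omega
  obtain rfl : i = 0 := by
    by_contra hi
    have := congrFun heq 0
    rw [update_of_ne (Ne.symm hi), update_of_ne (by omega), hf 0, hg 0,
      if_pos i.zero_le, if_pos j.zero_le] at this
    omega
  rw [psize, finsum_eq_single f 0 fun k hk => by simpa [hk] using hf k]
  exact hfi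

/-- Every partition of n ≥ 3 is reconstructible from its set of 1-deletions. -/
theorem one_deletion_reconstruction (n : ℕ) (hn : 3 ≤ n)
    (f g : ℕ → ℕ) (hf : IsPartition f) (hg : IsPartition g)
    (hfn : psize f = n) (hgn : psize g = n)
    (h : ∀ δ : ℕ → ℕ, IsDeletion 1 δ f ↔ IsDeletion 1 δ g) :
    f = g := by
  obtain ⟨i, hi⟩ := hf.exists_succ_lt (by omega)
  obtain ⟨j, hgj, heq⟩ :=
    ((h _).1 (hf.isDeletion_update hi)).exists_eq_update hg.hasFiniteSupport
  have hfi : f i ≠ 0 := by omega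
  rcases eq_or_ne i j with rfl | hij
  · exact eq_of_update_sub_one_eq hfi hgj heq
  · have hf_rect := hf.eq_ite_of_succ_lt_imp_eq fun m hm =>
      hf.eq_of_succ_lt_of_update_eq (fun δ => (h δ).1) hij hfi heq hm
    have hg_rect := hg.eq_ite_of_succ_lt_imp_eq fun m hm =>
      hg.eq_of_succ_lt_of_update_eq (fun δ => (h δ).2) hij.symm hgj heq.symm hm
    rcases hij.lt_or_gt with hlt | hgt
    · have := psize_eq_two_of_update_eq hlt hf_rect hg_rect hgj heq
      omega
    · have := psize_eq_two_of_update_eq hgt hg_rect hf_rect hfi heq.symm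
      omega
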